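/- Let G be a perfect group with universal central extension (Ẽ, i₀ : C → Ẽ, p₀ : Ẽ → G). Then for every commutative group A, the assignment f ↦ f_*Ẽ (pushout along f) classifies central extensions: for every central extension (E, i, p) of G by A there exists a unique group homomorphism f : C → A such that the pushout f_*Ẽ is equivalent to E. (Thus equivalence classes of central extensions of G by A are in bijection with Hom(C, A), i.e., CExt(G,A) ≅ Hom(π₁(G), A).) -/

import Mathlib

universe u

/-- A central extension of a group `G` by a commutative group `A`:
`i : A →* E` is injective with central image, `p : E →* G` is surjective,
and `ker p = range i`. -/
class IsCentralExtension {A E G : Type*} [CommGroup A] [Group E] [Group G]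
    (i : A →* E) (p : E →* G) : Prop where
  inj : Function.Injective i
  mem_center : ∀ a : A, i a ∈ Subgroup.center E
  surj : Function.Surjective p
  ker_eq_range : MonoidHom.ker p = MonoidHom.range i

/-- `(Ẽ, i₀, p₀)` is a universal central extension of `G`: it is a central extension of
`G` by `C`, and for every commutative group `A` and every central extension `(E,i,p)` of
`G` by `A`, there exists a unique homomorphism `φ : Ẽ →* E` lying over the identity of
`G`, i.e. with `p ∘ φ = p₀`. -/
def IsUniversalCentralExtension {G C Et : Type u} [Group G] [CommGroup C] [Group Et]
    (i₀ : C →* Et) (p₀ : Et →* G) : Prop :=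
  IsCentralExtension i₀ p₀ ∧
  ∀ (A E : Type u) [CommGroup A] [Group E] (i : A →* E) (p : E →* G),
    IsCentralExtension i p → ∃! φ : Et →* E, p.comp φ = p₀
theorem IsCentralExtension.p_i {A E G : Type*} [CommGroup A] [Group E] [Group G]
    (i : A →* E) (p : E →* G) [h : IsCentralExtension i p] (a : A) : p (i a) = 1 := by
  rw [← MonoidHom.mem_ker, h.ker_eq_range]
  exact ⟨a, rfl⟩

section Pushout

variable {G A B E : Type*} [Group G] [CommGroup A] [CommGroup B] [Group E]

/-- The subgroup `N = {(f(a), i(a)⁻¹) : a ∈ A}` of `B × E`, along which the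
pushout of a central extension `(E, i, p)` of `G` by `A` under `f : A →* B` is formed. -/
def pushN (f : A →* B) (i : A →* E) (p : E →* G) [IsCentralExtension i p] :
    Subgroup (B × E) where
  carrier := {x | ∃ a : A, x = (f a, (i a)⁻¹)}
  one_mem' := ⟨1, by simp; rfl⟩
  mul_mem' := by
    rintro _ _ ⟨a, rfl⟩ ⟨b, rfl⟩
    refine ⟨a * b, ?_⟩
    have h2 : (i a)⁻¹ * (i b)⁻¹ = (i (a * b))⁻¹ := by
      rw [← mul_inv_rev, ← map_mul, mul_comm b a]
    rw [Prod.mk_mul_mk, ← map_mul, h2]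
  inv_mem' := by
    rintro _ ⟨a, rfl⟩
    exact ⟨a⁻¹, by simp⟩

instance pushN_normal {f : A →* B} {i : A →* E} {p : E →* G} [IsCentralExtension i p] :
    (pushN f i p).Normal := by
  constructor
  rintro n ⟨a, rfl⟩ g
  refine ⟨a, ?_⟩
  have h2 := Subgroup.mem_center_iff.mp
    ((Subgroup.center E).inv_mem (IsCentralExtension.mem_center (i := i) (p := p) a)) g.2
  have : g * (f a, (i a)⁻¹) * g⁻¹ = (f a, (i a)⁻¹) := by
    refine Prod.ext ?_ ?_
    · show g.1 * f a * g.1⁻¹ = f a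
      rw [mul_comm g.1 (f a)]
      group
    · show g.2 * (i a)⁻¹ * g.2⁻¹ = (i a)⁻¹
      rw [h2]
      group
  rw [this]

/-- The structure map `i''(b) = [(b,1)]` of the pushout `f_*E = (B × E)/N`. -/
def pushI (f : A →* B) (i : A →* E) (p : E →* G) [IsCentralExtension i p] :
    B →* (B × E) ⧸ pushN f i p :=
  (QuotientGroup.mk' (pushN f i p)).comp (MonoidHom.inl B E)

/-- The structure map `p''([(b,e)]) = p(e)` of the pushout `f_*E = (B × E)/N`;
it is well defined, being obtained from `QuotientGroup.lift`. -/
def pushP (f : A →* B) (i : A →* E) (p : E →* G) [IsCentralExtension i p] :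
    ((B × E) ⧸ pushN f i p) →* G :=
  QuotientGroup.lift (pushN f i p) (p.comp (MonoidHom.snd B E))
    (by
      rintro _ ⟨a, rfl⟩
      simp only [MonoidHom.mem_ker, MonoidHom.comp_apply, MonoidHom.coe_snd, map_inv]
      rw [IsCentralExtension.p_i i p a, inv_one])

end Pushout

/-!
The universal property yields a unique `ψ : Ẽ →* E` over `G`. It maps `i₀(C) ⊆ ker p₀` into
`ker p = i(A)`, which defines `f : C →* A` with `i ∘ f = ψ ∘ i₀`, and then `(a, e) ↦ i(a) ψ(e)`
descends to an equivalence `f_*Ẽ →* E`. Conversely, an equivalence `φ : f'_*Ẽ →* E` restricted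
to `Ẽ` lies over `G`, so it is `ψ`; since `[(f' c, 1)] = [(1, i₀ c)]` in `f'_*Ẽ`, this gives
`i ∘ f' = ψ ∘ i₀ = i ∘ f`, and `f' = f` by injectivity of `i`.
-/

namespace IsCentralExtension

theorem commute {A E G : Type*} [CommGroup A] [Group E] [Group G] (i : A →* E) (p : E →* G)
    [IsCentralExtension i p] (a : A) (x : E) : Commute (i a) x :=
  ((Subgroup.mem_center_iff.mp (mem_center (p := p) a)) x).symm

variable {A E G : Type*} [CommGroup A] [Group E] [Group G] (i : A →* E) (p : E →* G)
  [IsCentralExtension i p]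

theorem comp_eq_one : p.comp i = 1 :=
  MonoidHom.ext (p_i i p)

theorem exists_comp_eq {C : Type*} [Group C] (g : C →* E) (hg : p.comp g = 1) :
    ∃ f : C →* A, i.comp f = g := by
  have hg_range : ∀ c, g c ∈ i.range := fun c => by
    rw [← ker_eq_range (p := p), MonoidHom.mem_ker, ← MonoidHom.comp_apply, hg,
      MonoidHom.one_apply]
  refine ⟨(MonoidHom.ofInjective (inj (p := p))).symm.toMonoidHom.comp
    (g.codRestrict i.range hg_range), MonoidHom.ext fun c => ?_⟩
  exact congrArg Subtype.val
    ((MonoidHom.ofInjective (inj (p := p))).apply_symm_apply ⟨g c, hg_range c⟩)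

end IsCentralExtension

section Pushout

variable {G A B E F : Type*} [Group G] [CommGroup A] [CommGroup B] [Group E] [Group F]
  (f : A →* B) (i : A →* E) (p : E →* G) [IsCentralExtension i p]

def pushInr : E →* (B × E) ⧸ pushN f i p :=
  (QuotientGroup.mk' (pushN f i p)).comp (MonoidHom.inr B E)

theorem pushI_comp : (pushI f i p).comp f = (pushInr f i p).comp i := by
  ext a
  exact QuotientGroup.eq.mpr ⟨a⁻¹, by simp⟩

theorem pushP_comp_pushInr : (pushP f i p).comp (pushInr f i p) = p := by
  ext x
  rfl

def pushLift (j : B →* F) (ψ : E →* F) (hj : ∀ b x, Commute (j b) (ψ x))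
    (h : ψ.comp i = j.comp f) : (B × E) ⧸ pushN f i p →* F :=
  QuotientGroup.lift (pushN f i p) (j.noncommCoprod ψ hj) (by
    rintro _ ⟨a, rfl⟩
    simp [MonoidHom.noncommCoprod_apply, ← MonoidHom.comp_apply ψ i, h])

variable {f i p} {j : B →* F} {ψ : E →* F} {hj : ∀ b x, Commute (j b) (ψ x)}
  {h : ψ.comp i = j.comp f}

theorem pushLift_comp_pushI : (pushLift f i p j ψ hj h).comp (pushI f i p) = j := by
  ext b
  simp [pushLift, pushI, MonoidHom.noncommCoprod_apply]

theorem comp_pushLift {q : F →* G} (hqj : q.comp j = 1) (hqψ : q.comp ψ = p) :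
    q.comp (pushLift f i p j ψ hj h) = pushP f i p := by
  ext ⟨b, x⟩
  change q (j b * ψ x) = p x
  rw [map_mul, ← MonoidHom.comp_apply q j, ← MonoidHom.comp_apply q ψ, hqj, hqψ,
    MonoidHom.one_apply, one_mul]

end Pushout

theorem pushout_classifies_central_extensions_general {G C Et : Type u}
    [Group G] [CommGroup C] [Group Et]
    (i₀ : C →* Et) (p₀ : Et →* G) [IsCentralExtension i₀ p₀]
    (huniv : IsUniversalCentralExtension i₀ p₀)
    {A E : Type u} [CommGroup A] [Group E]
    (i : A →* E) (p : E →* G) [IsCentralExtension i p] :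
    ∃! f : C →* A, ∃ φ : ((A × Et) ⧸ pushN f i₀ p₀) →* E,
      φ.comp (pushI f i₀ p₀) = i ∧ p.comp φ = pushP f i₀ p₀ := by
  obtain ⟨ψ, hψ, hψ_unique⟩ := huniv.2 A E i p ‹_›
  obtain ⟨f, hf⟩ := IsCentralExtension.exists_comp_eq i p (ψ.comp i₀) (by
    rw [← MonoidHom.comp_assoc, hψ, IsCentralExtension.comp_eq_one])
  refine ⟨f, ⟨pushLift f i₀ p₀ i ψ (fun a x => IsCentralExtension.commute i p a (ψ x)) hf.symm,
    pushLift_comp_pushI, comp_pushLift (IsCentralExtension.comp_eq_one i p) hψ⟩, ?_⟩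
  rintro f' ⟨φ, hφi, hφp⟩
  have hφψ : φ.comp (pushInr f' i₀ p₀) = ψ :=
    hψ_unique _ (by beta_reduce; rw [← MonoidHom.comp_assoc, hφp, pushP_comp_pushInr])
  refine (MonoidHom.cancel_left (IsCentralExtension.inj (i := i) (p := p))).mp ?_
  rw [hf, ← hφψ, ← hφi, MonoidHom.comp_assoc, pushI_comp, MonoidHom.comp_assoc]

/-- let `G` be a perfect group with universal central extension
`(Ẽ, i₀ : C →* Ẽ, p₀)`.  For every commutative group `A` and every central extension
`(E,i,p)` of `G` by `A`, there is a unique homomorphism `f : C →* A` such that the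
pushout `f_*Ẽ` is equivalent to `E`; thus `CExt(G,A) ≅ Hom(π₁(G), A)`. -/
theorem pushout_classifies_central_extensions {G C Et : Type u}
    [Group G] [CommGroup C] [Group Et]
    (hperf : commutator G = ⊤)
    (i₀ : C →* Et) (p₀ : Et →* G) [IsCentralExtension i₀ p₀]
    (huniv : IsUniversalCentralExtension i₀ p₀)
    {A E : Type u} [CommGroup A] [Group E]
    (i : A →* E) (p : E →* G) [IsCentralExtension i p] :
    ∃! f : C →* A, ∃ φ : ((A × Et) ⧸ pushN f i₀ p₀) →* E,
      φ.comp (pushI f i₀ p₀) = i ∧ p.comp φ = pushP f i₀ p₀ :=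
  pushout_classifies_central_extensions_general i₀ p₀ huniv i p
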